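/- arXiv:1712.07111 — 2 statements merged into one kernel-verified Lean document; each statement's English description precedes it below -/
import Mathlib

section
/- Let γ ∈ [−3,0), 0 < T̲ ≤ T, and λ, Λ > 0. Suppose ā : (T̲/2, T]×ℝ³×ℝ³ → Sym₃(ℝ) and c̄ : (T̲/2, T]×ℝ³×ℝ³ → [0,∞) satisfy, for all (t,x,v): e·ā(t,x,v)e ≥ λ⟨v⟩^γ for every unit vector e; v·ā(t,x,v)v ≥ λ|v|²⟨v⟩^γ; tr ā(t,x,v) ≤ Λ⟨v⟩^{γ+2}; and v·ā(t,x,v)v ≤ Λ|v|²⟨v⟩^γ. Then there exists C₁ > 0, depending only on γ, λ, Λ, such that for every δ₁ > 0 the function f̲(t,x,v) = δ₁ exp(−β(t)|v|^{2−γ}) with β(t) = 1 + C₁/(t − T̲/2) satisfies the differential inequality ∂_t f̲ + v·∇_x f̲ − tr(ā(t,x,v) D²_v f̲) − c̄(t,x,v) f̲ ≤ 0 for all (t,x,v) with t ∈ (T̲/2, T] and |v| ≥ 1 (i.e., f̲ is a subsolution of the linear Landau-type equation on this region). -/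
noncomputable section

open MeasureTheory Real Filter ENNReal

/-- Velocity/position space ℝ³. -/
abbrev E3 : Type := EuclideanSpace ℝ (Fin 3)

/-- Japanese bracket `⟨v⟩ = (1 + |v|²)^{1/2}`. -/
def jap (v : E3) : ℝ := Real.sqrt (1 + ‖v‖ ^ 2)

/-- Partial derivative ∂_{x_i} of a function on phase space ℝ³ₓ × ℝ³ᵥ. -/
def pdX (i : Fin 3) (f : E3 × E3 → ℝ) : E3 × E3 → ℝ :=
  fun z => fderiv ℝ f z (EuclideanSpace.single i 1, 0)

/-- Partial derivative ∂_{v_i} of a function on phase space ℝ³ₓ × ℝ³ᵥ. -/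
def pdV (i : Fin 3) (f : E3 × E3 → ℝ) : E3 × E3 → ℝ :=
  fun z => fderiv ℝ f z (0, EuclideanSpace.single i 1)

/-- Multi-index derivative ∂_x^α ∂_v^β. -/
def pdM (α β : Fin 3 → ℕ) (f : E3 × E3 → ℝ) : E3 × E3 → ℝ :=
  (pdV 2)^[β 2] <| (pdV 1)^[β 1] <| (pdV 0)^[β 0] <|
  (pdX 2)^[α 2] <| (pdX 1)^[α 1] <| (pdX 0)^[α 0] f

/-- Pairs of multi-indices (α, β) with |α| + |β| ≤ k. -/
def multiIdx (k : ℕ) : Finset ((Fin 3 → ℕ) × (Fin 3 → ℕ)) :=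
  (Finset.Icc 0 (fun _ => k) ×ˢ Finset.Icc 0 (fun _ => k)).filter
    (fun p => (∑ i, p.1 i) + (∑ i, p.2 i) ≤ k)

/-- The squared uniformly local Sobolev norm ‖g‖²_{H^{k,ℓ}_ul(ℝ⁶)}
(relative to a cutoff function φ). -/
def ulNormSq (φ : E3 → ℝ) (k ℓ : ℕ) (g : E3 × E3 → ℝ) : ℝ≥0∞ :=
  ∑ p ∈ multiIdx k,
    ⨆ a : E3, ∫⁻ z : E3 × E3,
      ENNReal.ofReal ((φ (z.1 - a) * jap z.2 ^ ℓ * pdM p.1 p.2 g z) ^ 2)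

/-- φ is an admissible cutoff: smooth, compactly supported, 0 ≤ φ ≤ 1,
φ ≡ 1 on B₁ and φ ≡ 0 outside B₂. -/
def IsCutoff (φ : E3 → ℝ) : Prop :=
  ContDiff ℝ (⊤ : ℕ∞) φ ∧ HasCompactSupport φ ∧ (∀ x, 0 ≤ φ x ∧ φ x ≤ 1) ∧
  (∀ x ∈ Metric.ball (0 : E3) 1, φ x = 1) ∧ (∀ x ∉ Metric.ball (0 : E3) 2, φ x = 0)

/-- Membership in Y^k_T = L^∞([0,T], H^k_ul) ∩ L²([0,T], H^{k,1}_ul). -/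
def MemY (φ : E3 → ℝ) (k : ℕ) (T : ℝ) (F : ℝ → E3 × E3 → ℝ) : Prop :=
  (∃ C : ℝ≥0∞, C < ⊤ ∧ ∀ t ∈ Set.Icc (0 : ℝ) T, ulNormSq φ k 0 (F t) ≤ C) ∧
  (∫⁻ t in Set.Icc (0 : ℝ) T, ulNormSq φ k 1 (F t)) < ⊤

/-- The Landau diffusion matrix ā[h] for h : ℝ³ → ℝ. -/
def abar (γ aγ : ℝ) (h : E3 → ℝ) (v : E3) : Matrix (Fin 3) (Fin 3) ℝ :=
  Matrix.of fun i j =>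
    aγ * ∫ w : E3, ((if i = j then (1 : ℝ) else 0) - w i * w j / ‖w‖ ^ 2) *
      ‖w‖ ^ (γ + 2) * h (v - w)

/-- The Landau reaction coefficient c̄[h] (with the convention c̄[h] = c₃ h when γ = −3). -/
def cbar (γ cγ c3 : ℝ) (h : E3 → ℝ) (v : E3) : ℝ :=
  if γ = -3 then c3 * h v else cγ * ∫ w : E3, ‖w‖ ^ γ * h (v - w)

/-- f is a (pointwise, classical) solution of the Landau equation on [0,T] × ℝ³ × ℝ³. -/
def IsLandauSolution (γ aγ cγ c3 T : ℝ) (f : ℝ → E3 × E3 → ℝ) : Prop :=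
  ∀ t ∈ Set.Icc (0 : ℝ) T, ∀ x v : E3,
    deriv (fun s => f s (x, v)) t + ∑ i, v i * pdX i (f t) (x, v) =
      (∑ i, ∑ j, abar γ aγ (fun w => f t (x, w)) v i j * pdV i (pdV j (f t)) (x, v)) +
        cbar γ cγ c3 (fun w => f t (x, w)) v * f t (x, v)

/-- Mass density M(t,x). -/
def massDensity (f : ℝ → E3 × E3 → ℝ) (t : ℝ) (x : E3) : ℝ := ∫ v : E3, f t (x, v)

/-- Energy density E(t,x). -/
def energyDensity (f : ℝ → E3 × E3 → ℝ) (t : ℝ) (x : E3) : ℝ :=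
  ∫ v : E3, ‖v‖ ^ 2 * f t (x, v)

/-- Moment density P(t,x) = ∫ |v|^p f dv. -/
def momentDensity (p : ℝ) (f : ℝ → E3 × E3 → ℝ) (t : ℝ) (x : E3) : ℝ :=
  ∫ v : E3, ‖v‖ ^ p * f t (x, v)

/-- The physical quantities are bounded by K on [0,T]: mass and energy when γ ∈ (−2,0);
additionally the p-th moment and the L^∞-in-v norm when γ ∈ [−3,−2]. -/
def PhysBoundedBy (γ p K T : ℝ) (f : ℝ → E3 × E3 → ℝ) : Prop :=
  ∀ t ∈ Set.Icc (0 : ℝ) T, ∀ x : E3,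
    ((-2 < γ) → massDensity f t x + energyDensity f t x ≤ K) ∧
    (γ ≤ -2 →
      massDensity f t x + energyDensity f t x + momentDensity p f t x ≤ K ∧
      ∀ v : E3, |f t (x, v)| ≤ K)

/-- g : ℝ³×ℝ³ → ℝ is well-distributed with parameters R, δ, r. -/
def WellDistributed (R δ r : ℝ) (g : E3 × E3 → ℝ) : Prop :=
  ∀ x : E3, ∃ xm ∈ Metric.ball x R, ∃ vm ∈ Metric.ball (0 : E3) R,
    ∀ z : E3 × E3, z.1 ∈ Metric.ball xm r → z.2 ∈ Metric.ball vm r → δ ≤ g z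

end

namespace Stmt17

noncomputable section
open MeasureTheory Real Filter ENNReal

/-- Partial derivative ∂_{v_i} for functions on ℝ³. -/
def pd3 (i : Fin 3) (h : E3 → ℝ) : E3 → ℝ :=
  fun v => fderiv ℝ h v (EuclideanSpace.single i 1)

/-- The barrier f̲(t,x,v) = δ₁ exp(−β(t)|v|^{2−γ}) with β(t) = 1 + C₁/(t − T̲/2). -/
def subf (γ Tlow δ₁ C₁ : ℝ) (t : ℝ) (v : E3) : ℝ :=
  δ₁ * Real.exp (-(1 + C₁ / (t - Tlow / 2)) * ‖v‖ ^ (2 - γ))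


/-!
Write `s = ‖v‖²`, `p = 1 - γ/2` and `τ = t - T̲/2`, so that `f̲ = δ₁ g(s)` with
`g(s) = exp(-β s^p)`. For a radial profile the Hessian is `4 g''(s) v ⊗ v + 2 g'(s) I`, so the
diffusion term only sees the quadratic form `v · ā v` and the trace `tr ā`. For `|v| ≥ 1` the
hypotheses make `v · ā v` comparable to `s^(2-p)` and bound `tr ā ≤ 2Λ s`, so the operator
applied to `f̲` is at most `f̲ s^p (C₁/τ² + 4Λβp² - λβ²p²)`. The square of the gradient supplies
the good term `λβ²p²`, and since `β ≥ C₁/τ` it beats the other two once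
`C₁ ≥ 2/(λp²) + 8Λ(T - T̲/2)/λ`.
-/

open Topology
open scoped RealInnerProductSpace

theorem fderiv_fderiv_comp_norm_sq {F : Type*} [NormedAddCommGroup F]
    [InnerProductSpace ℝ F] {g g' : ℝ → ℝ} {g'' : ℝ} {u : F}
    (hg : ∀ᶠ s in 𝓝 (‖u‖ ^ 2), HasDerivAt g (g' s) s)
    (hg' : HasDerivAt g' g'' (‖u‖ ^ 2)) (e e' : F) :
    fderiv ℝ (fun w => fderiv ℝ (fun w => g (‖w‖ ^ 2)) w e) u e' =
      4 * g'' * ⟪u, e⟫ * ⟪u, e'⟫ + 2 * g' (‖u‖ ^ 2) * ⟪e, e'⟫ := by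
  have h_first : (fun w => fderiv ℝ (fun w => g (‖w‖ ^ 2)) w e) =ᶠ[𝓝 u]
      fun w => g' (‖w‖ ^ 2) * (2 * ⟪e, w⟫) := by
    filter_upwards [((continuous_norm.pow 2).tendsto u).eventually hg] with w hw
    have := (hw.comp_hasFDerivAt w (hasStrictFDerivAt_norm_sq w).hasFDerivAt).fderiv
    simp only [Function.comp_def, Pi.pow_apply] at this
    simp [this, real_inner_comm]
  have h_second : HasFDerivAt (fun w => g' (‖w‖ ^ 2) * (2 * ⟪e, w⟫))
      (g' (‖u‖ ^ 2) • (2 : ℝ) • innerSL ℝ e +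
        (2 * ⟪e, u⟫) • g'' • (2 : ℕ) • innerSL ℝ u) u :=
    (hg'.comp_hasFDerivAt u (hasStrictFDerivAt_norm_sq u).hasFDerivAt).mul
      (((innerSL ℝ e).hasFDerivAt (x := u)).const_mul 2)
  rw [h_first.fderiv_eq, h_second.fderiv]
  simp [real_inner_comm]
  ring

theorem sum_sum_mul_quadratic_add_ite {n : Type*} [Fintype n] [DecidableEq n]
    (a : Matrix n n ℝ) (v : n → ℝ) (A B : ℝ) :
    ∑ i, ∑ j, a i j * (A * v j * v i + B * if i = j then 1 else 0) =
      A * ∑ i, ∑ j, a i j * v i * v j + B * a.trace := by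
  simp [mul_add, Finset.sum_add_distrib, Matrix.trace, Finset.mul_sum, mul_comm, mul_left_comm]

def barrier (δ β p s : ℝ) : ℝ := δ * Real.exp (-β * s ^ p)

section barrier

variable {δ β p : ℝ}

theorem barrier_nonneg (hδ : 0 ≤ δ) (s : ℝ) : 0 ≤ barrier δ β p s := by
  unfold barrier; positivity

theorem hasDerivAt_barrier (hp : 1 ≤ p) (s : ℝ) :
    HasDerivAt (barrier δ β p) (-(β * p) * s ^ (p - 1) * barrier δ β p s) s :=
  (((Real.hasDerivAt_rpow_const (Or.inr hp)).const_mul (-β)).exp.const_mul δ).congr_deriv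
    (by simp only [barrier]; ring)

theorem hasDerivAt_barrier_deriv {s : ℝ} (hp : 1 ≤ p) (hs : s ≠ 0) :
    HasDerivAt (fun s => -(β * p) * s ^ (p - 1) * barrier δ β p s)
      (barrier δ β p s *
        ((β * p) ^ 2 * (s ^ (p - 1)) ^ 2 - β * p * (p - 1) * s ^ (p - 2))) s :=
  (((Real.hasDerivAt_rpow_const (Or.inl hs)).const_mul (-(β * p))).mul
    (hasDerivAt_barrier hp s)).congr_deriv (by rw [show p - 1 - 1 = p - 2 by ring]; ring)

theorem hasDerivAt_barrier_time {C t₀ t : ℝ} (ht : t ≠ t₀) (s : ℝ) :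
    HasDerivAt (fun t => barrier δ (1 + C / (t - t₀)) p s)
      (barrier δ (1 + C / (t - t₀)) p s * (C / (t - t₀) ^ 2 * s ^ p)) t := by
  have hβ := ((hasDerivAt_const t C).div ((hasDerivAt_id t).sub_const t₀)
    (sub_ne_zero.2 ht)).const_add 1
  refine ((hβ.neg.mul_const (s ^ p)).exp.const_mul δ).congr_deriv ?_
  simp only [barrier, id, Pi.neg_apply, Pi.div_apply]
  ring

theorem sum_sum_mul_pd3_pd3_barrier (a : Matrix (Fin 3) (Fin 3) ℝ) {v : E3} (hp : 1 ≤ p)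
    (hv : v ≠ 0) :
    ∑ i, ∑ j, a i j * pd3 i (pd3 j fun u => barrier δ β p (‖u‖ ^ 2)) v =
      barrier δ β p (‖v‖ ^ 2) *
        (4 * ((β * p) ^ 2 * ((‖v‖ ^ 2) ^ (p - 1)) ^ 2 -
          β * p * (p - 1) * (‖v‖ ^ 2) ^ (p - 2)) * ∑ i, ∑ j, a i j * v i * v j -
        2 * (β * p) * (‖v‖ ^ 2) ^ (p - 1) * a.trace) := by
  have hs : ‖v‖ ^ 2 ≠ 0 := by positivity
  have hd : ∀ i j, pd3 i (pd3 j fun u => barrier δ β p (‖u‖ ^ 2)) v = _ := fun i j =>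
    fderiv_fderiv_comp_norm_sq (Filter.Eventually.of_forall (hasDerivAt_barrier hp))
      (hasDerivAt_barrier_deriv hp hs) (EuclideanSpace.single j 1) (EuclideanSpace.single i 1)
  simp only [hd, EuclideanSpace.inner_single_right, PiLp.single_apply, one_mul, conj_trivial]
  rw [sum_sum_mul_quadratic_add_ite]
  ring

end barrier

theorem jap_rpow (v : E3) (a : ℝ) : jap v ^ a = (1 + ‖v‖ ^ 2) ^ (a / 2) := by
  rw [jap, Real.sqrt_eq_rpow, ← Real.rpow_mul (by positivity)]
  ring_nf

theorem jap_rpow_le {v : E3} (hv : v ≠ 0) {a : ℝ} (ha : a ≤ 0) :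
    jap v ^ a ≤ (‖v‖ ^ 2) ^ (a / 2) := by
  rw [jap_rpow]
  exact Real.rpow_le_rpow_of_nonpos (by positivity) (by linarith) (by linarith)

theorem rpow_div_four_le_jap_rpow {v : E3} (hv : 1 ≤ ‖v‖) {a : ℝ} (ha₀ : -4 ≤ a)
    (ha : a ≤ 0) : (‖v‖ ^ 2) ^ (a / 2) / 4 ≤ jap v ^ a := by
  have hs : 1 ≤ ‖v‖ ^ 2 := one_le_pow₀ hv
  have h_two : (1 / 4 : ℝ) ≤ 2 ^ (a / 2) := by
    calc (1 / 4 : ℝ) = 2 ^ (-2 : ℝ) := by norm_num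
      _ ≤ 2 ^ (a / 2) := Real.rpow_le_rpow_of_exponent_le one_le_two (by linarith)
  calc (‖v‖ ^ 2) ^ (a / 2) / 4 ≤ 2 ^ (a / 2) * (‖v‖ ^ 2) ^ (a / 2) := by
        nlinarith [Real.rpow_nonneg (zero_le_one.trans hs) (a / 2)]
    _ = (2 * ‖v‖ ^ 2) ^ (a / 2) := (Real.mul_rpow zero_le_two (by positivity)).symm
    _ ≤ jap v ^ a := by
      rw [jap_rpow]
      exact Real.rpow_le_rpow_of_nonpos (by positivity) (by linarith) (by linarith)

theorem jap_rpow_le_two_mul_norm_sq {v : E3} (hv : 1 ≤ ‖v‖) {a : ℝ} (ha : a ≤ 2) :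
    jap v ^ a ≤ 2 * ‖v‖ ^ 2 := by
  have hs : 1 ≤ ‖v‖ ^ 2 := one_le_pow₀ hv
  calc jap v ^ a ≤ jap v ^ (2 : ℝ) :=
        Real.rpow_le_rpow_of_exponent_le (Real.one_le_sqrt.2 (by linarith)) ha
    _ = 1 + ‖v‖ ^ 2 := by rw [Real.rpow_two, jap, Real.sq_sqrt (by positivity)]
    _ ≤ 2 * ‖v‖ ^ 2 := by linarith

theorem barrier_bracket_nonpos {lam Lam p β K s Q Tr c : ℝ} (hp : 1 ≤ p) (hβ : 0 ≤ β)
    (hLam : 0 ≤ Lam) (hs : 1 ≤ s) (hQ_low : lam / 4 * (s * s ^ (1 - p)) ≤ Q)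
    (hQ_up : Q ≤ Lam * (s * s ^ (1 - p))) (hTr : Tr ≤ 2 * Lam * s) (hc : 0 ≤ c)
    (hK : K + 4 * Lam * β * p ^ 2 ≤ lam * β ^ 2 * p ^ 2) :
    K * s ^ p - (4 * ((β * p) ^ 2 * (s ^ (p - 1)) ^ 2 - β * p * (p - 1) * s ^ (p - 2)) * Q -
      2 * (β * p) * s ^ (p - 1) * Tr) - c ≤ 0 := by
  have hs₀ : 0 < s := by linarith
  have hp₁ : 0 ≤ p - 1 := by linarith
  have hsp : 1 ≤ s ^ p := Real.one_le_rpow hs (by linarith)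
  have e₁ : (s ^ (p - 1)) ^ 2 * (s * s ^ (1 - p)) = s ^ p := by
    rw [mul_comm s, ← Real.rpow_add_one hs₀.ne', sq, ← Real.rpow_add hs₀,
      ← Real.rpow_add hs₀]
    ring_nf
  have e₂ : s ^ (p - 2) * (s * s ^ (1 - p)) = 1 := by
    rw [mul_comm s, ← Real.rpow_add_one hs₀.ne', ← Real.rpow_add hs₀]
    ring_nf; exact Real.rpow_zero s
  have e₃ : s ^ (p - 1) * s = s ^ p := by
    rw [← Real.rpow_add_one hs₀.ne']; ring_nf
  have h_gradient :
      lam * β ^ 2 * p ^ 2 * s ^ p ≤ 4 * (β * p) ^ 2 * (s ^ (p - 1)) ^ 2 * Q := by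
    have := mul_le_mul_of_nonneg_left hQ_low
      (by positivity : 0 ≤ 4 * (β * p) ^ 2 * (s ^ (p - 1)) ^ 2)
    linear_combination this - lam * β ^ 2 * p ^ 2 * e₁
  have h_radial : 4 * (β * p * (p - 1)) * s ^ (p - 2) * Q ≤
      4 * Lam * β * p * (p - 1) * s ^ p := by
    have := mul_le_mul_of_nonneg_left hQ_up
      (by positivity : 0 ≤ 4 * (β * p * (p - 1)) * s ^ (p - 2))
    have hcoef : 0 ≤ 4 * Lam * β * p * (p - 1) := by positivity
    linear_combination this + mul_le_mul_of_nonneg_left hsp hcoef +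
      4 * Lam * β * p * (p - 1) * e₂
  have h_trace : 2 * (β * p) * s ^ (p - 1) * Tr ≤ 4 * Lam * β * p * s ^ p := by
    have := mul_le_mul_of_nonneg_left hTr (by positivity : 0 ≤ 2 * (β * p) * s ^ (p - 1))
    linear_combination this + 4 * Lam * β * p * e₃
  linarith [mul_le_mul_of_nonneg_right hK (by linarith : 0 ≤ s ^ p)]

theorem landau_bracket_nonpos {lam Lam γ p β K c : ℝ} {a : Matrix (Fin 3) (Fin 3) ℝ}
    {v : E3} (hp : p = 1 - γ / 2) (hγ₀ : -4 ≤ γ) (hγ₁ : γ ≤ 0) (hβ : 0 ≤ β)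
    (hlam : 0 ≤ lam) (hLam : 0 ≤ Lam) (hv : 1 ≤ ‖v‖)
    (h_low : lam * ‖v‖ ^ 2 * jap v ^ γ ≤ ∑ i, ∑ j, a i j * v i * v j)
    (h_up : ∑ i, ∑ j, a i j * v i * v j ≤ Lam * ‖v‖ ^ 2 * jap v ^ γ)
    (h_tr : a.trace ≤ Lam * jap v ^ (γ + 2)) (hc : 0 ≤ c)
    (hK : K + 4 * Lam * β * p ^ 2 ≤ lam * β ^ 2 * p ^ 2) :
    K * (‖v‖ ^ 2) ^ p - (4 * ((β * p) ^ 2 * ((‖v‖ ^ 2) ^ (p - 1)) ^ 2 -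
      β * p * (p - 1) * (‖v‖ ^ 2) ^ (p - 2)) * ∑ i, ∑ j, a i j * v i * v j -
      2 * (β * p) * (‖v‖ ^ 2) ^ (p - 1) * a.trace) - c ≤ 0 := by
  have hexp : 1 - p = γ / 2 := by rw [hp]; ring
  refine barrier_bracket_nonpos (by linarith) hβ hLam (one_le_pow₀ hv) ?_ ?_ ?_ hc hK
  · calc lam / 4 * (‖v‖ ^ 2 * (‖v‖ ^ 2) ^ (1 - p))
        = lam * ‖v‖ ^ 2 * ((‖v‖ ^ 2) ^ (γ / 2) / 4) := by rw [hexp]; ring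
      _ ≤ lam * ‖v‖ ^ 2 * jap v ^ γ := by
        gcongr; exact rpow_div_four_le_jap_rpow hv hγ₀ hγ₁
      _ ≤ _ := h_low
  · calc _ ≤ Lam * ‖v‖ ^ 2 * jap v ^ γ := h_up
      _ ≤ Lam * ‖v‖ ^ 2 * (‖v‖ ^ 2) ^ (γ / 2) := by
        gcongr; exact jap_rpow_le (norm_pos_iff.1 (by linarith)) hγ₁
      _ = _ := by rw [hexp]; ring
  · calc _ ≤ Lam * jap v ^ (γ + 2) := h_tr
      _ ≤ Lam * (2 * ‖v‖ ^ 2) := by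
        gcongr; exact jap_rpow_le_two_mul_norm_sq hv (by linarith)
      _ = _ := by ring

theorem barrier_coeff_le {lam Lam p C τ Tm : ℝ} (hlam : 0 < lam) (hLam : 0 ≤ Lam)
    (hτ : 0 < τ) (hτT : τ ≤ Tm) (hC₁ : 2 ≤ lam * p ^ 2 * C) (hC₂ : 8 * Lam * Tm ≤ lam * C) :
    C / τ ^ 2 + 4 * Lam * (1 + C / τ) * p ^ 2 ≤ lam * (1 + C / τ) ^ 2 * p ^ 2 := by
  have hC : 0 < C := by
    by_contra! h
    nlinarith [mul_nonneg (by positivity : 0 ≤ lam * p ^ 2) (neg_nonneg.2 h)]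
  set u := C / τ with hu
  have hu₀ : 0 < u := by positivity
  have h_quad : 2 * (C / τ ^ 2) ≤ lam * p ^ 2 * u ^ 2 := by
    have : lam * p ^ 2 * u ^ 2 = lam * p ^ 2 * C * (C / τ ^ 2) := by rw [hu]; field_simp
    rw [this]; exact mul_le_mul_of_nonneg_right hC₁ (by positivity)
  have h_lin : 8 * Lam ≤ lam * u := by
    rw [hu, mul_div_assoc', le_div_iff₀ hτ]; nlinarith
  nlinarith [mul_le_mul_of_nonneg_left h_lin (by positivity : 0 ≤ p ^ 2 * (1 + u))]

theorem landau_subsolution_general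
    (γ Tlow T lam Lam : ℝ)
    (hγ : γ ∈ Set.Ico (-3 : ℝ) 0)
    (hTlow : 0 < Tlow) (hT : Tlow ≤ T) (hlam : 0 < lam) (hLam : 0 < Lam)
    (abar : ℝ → E3 → E3 → Matrix (Fin 3) (Fin 3) ℝ)
    (cbar : ℝ → E3 → E3 → ℝ)
    (hc_nonneg : ∀ t ∈ Set.Ioc (Tlow / 2) T, ∀ x v : E3, 0 ≤ cbar t x v)
    (h_ell_low_v : ∀ t ∈ Set.Ioc (Tlow / 2) T, ∀ x v : E3,
      lam * ‖v‖ ^ 2 * jap v ^ γ ≤ ∑ i, ∑ j, abar t x v i j * v i * v j)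
    (h_tr_up : ∀ t ∈ Set.Ioc (Tlow / 2) T, ∀ x v : E3,
      Matrix.trace (abar t x v) ≤ Lam * jap v ^ (γ + 2))
    (h_up_v : ∀ t ∈ Set.Ioc (Tlow / 2) T, ∀ x v : E3,
      (∑ i, ∑ j, abar t x v i j * v i * v j) ≤ Lam * ‖v‖ ^ 2 * jap v ^ γ) :
    ∃ C₁ : ℝ, 0 < C₁ ∧
      ∀ δ₁ : ℝ, 0 < δ₁ →
        ∀ t ∈ Set.Ioc (Tlow / 2) T, ∀ x v : E3, 1 ≤ ‖v‖ →
          deriv (fun s => subf γ Tlow δ₁ C₁ s v) t -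
            (∑ i, ∑ j, abar t x v i j *
              pd3 i (pd3 j (fun u => subf γ Tlow δ₁ C₁ t u)) v) -
            cbar t x v * subf γ Tlow δ₁ C₁ t v ≤ 0 := by
  obtain ⟨hγ₀, hγ₁⟩ := hγ
  set p := 1 - γ / 2 with hp
  have hp₁ : 1 ≤ p := by linarith
  have hTm : 0 ≤ T - Tlow / 2 := by linarith
  set C₁ := 2 / (lam * p ^ 2) + 8 * Lam * (T - Tlow / 2) / lam with hC₁
  have hC₁_quad : 2 ≤ lam * p ^ 2 * C₁ := by
    rw [hC₁, mul_add, mul_div_cancel₀ _ (by positivity)]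
    linarith [(by positivity : 0 ≤ lam * p ^ 2 * (8 * Lam * (T - Tlow / 2) / lam))]
  have hC₁_lin : 8 * Lam * (T - Tlow / 2) ≤ lam * C₁ := by
    rw [hC₁, mul_add, mul_div_cancel₀ _ hlam.ne']
    linarith [(by positivity : 0 ≤ lam * (2 / (lam * p ^ 2)))]
  refine ⟨C₁, by positivity, fun δ₁ hδ₁ t ht x v hv => ?_⟩
  have hτ : 0 < t - Tlow / 2 := by linarith [ht.1]
  have hsubf : ∀ s u, subf γ Tlow δ₁ C₁ s u =
      barrier δ₁ (1 + C₁ / (s - Tlow / 2)) p (‖u‖ ^ 2) := by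
    intro s u
    rw [subf, barrier, ← Real.rpow_natCast, ← Real.rpow_mul (norm_nonneg u)]
    congr 4; push_cast; ring
  simp only [hsubf]
  rw [(hasDerivAt_barrier_time (sub_pos.1 hτ).ne' _).deriv,
    sum_sum_mul_pd3_pd3_barrier _ hp₁ (norm_pos_iff.1 (by linarith))]
  have hB := landau_bracket_nonpos (K := C₁ / (t - Tlow / 2) ^ 2) (a := abar t x v) hp
    (by linarith) hγ₁.le (by positivity) hlam.le hLam.le hv (h_ell_low_v t ht x v)
    (h_up_v t ht x v) (h_tr_up t ht x v) (hc_nonneg t ht x v)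
    (barrier_coeff_le hlam hLam.le hτ (by linarith [ht.2]) hC₁_quad hC₁_lin)
  linear_combination mul_nonpos_of_nonneg_of_nonpos (barrier_nonneg hδ₁.le _) hB

/-- **The sub-solution construction in the proof of Theorem 1.3 (ii).** -/
theorem landau_subsolution
    (γ Tlow T lam Lam : ℝ)
    (hγ : γ ∈ Set.Ico (-3 : ℝ) 0)
    (hTlow : 0 < Tlow) (hT : Tlow ≤ T) (hlam : 0 < lam) (hLam : 0 < Lam)
    (abar : ℝ → E3 → E3 → Matrix (Fin 3) (Fin 3) ℝ)
    (cbar : ℝ → E3 → E3 → ℝ)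
    (habar_symm : ∀ t ∈ Set.Ioc (Tlow / 2) T, ∀ x v : E3, (abar t x v).IsSymm)
    (hc_nonneg : ∀ t ∈ Set.Ioc (Tlow / 2) T, ∀ x v : E3, 0 ≤ cbar t x v)
    (h_ell_low : ∀ t ∈ Set.Ioc (Tlow / 2) T, ∀ x v : E3, ∀ e : E3, ‖e‖ = 1 →
      lam * jap v ^ γ ≤ ∑ i, ∑ j, abar t x v i j * e i * e j)
    (h_ell_low_v : ∀ t ∈ Set.Ioc (Tlow / 2) T, ∀ x v : E3,
      lam * ‖v‖ ^ 2 * jap v ^ γ ≤ ∑ i, ∑ j, abar t x v i j * v i * v j)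
    (h_tr_up : ∀ t ∈ Set.Ioc (Tlow / 2) T, ∀ x v : E3,
      Matrix.trace (abar t x v) ≤ Lam * jap v ^ (γ + 2))
    (h_up_v : ∀ t ∈ Set.Ioc (Tlow / 2) T, ∀ x v : E3,
      (∑ i, ∑ j, abar t x v i j * v i * v j) ≤ Lam * ‖v‖ ^ 2 * jap v ^ γ) :
    ∃ C₁ : ℝ, 0 < C₁ ∧
      ∀ δ₁ : ℝ, 0 < δ₁ →
        ∀ t ∈ Set.Ioc (Tlow / 2) T, ∀ x v : E3, 1 ≤ ‖v‖ →
          deriv (fun s => subf γ Tlow δ₁ C₁ s v) t -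
            (∑ i, ∑ j, abar t x v i j *
              pd3 i (pd3 j (fun u => subf γ Tlow δ₁ C₁ t u)) v) -
            cbar t x v * subf γ Tlow δ₁ C₁ t v ≤ 0 :=
  landau_subsolution_general γ Tlow T lam Lam hγ hTlow hT hlam hLam abar cbar hc_nonneg h_ell_low_v
    h_tr_up h_up_v

end
end Stmt17
end

section
/- Let γ ∈ [−3,0), T > 0, ρ > 0, C₀ > 0. Suppose ā : [0,T]×ℝ³×ℝ³ → Sym₃(ℝ) is pointwise nonnegative definite with tr ā(t,x,v) ≤ C₀⟨v⟩^{γ+2} and v·ā(t,x,v)v ≤ C₀|v|²⟨v⟩^γ for all (t,x,v), and c̄ : [0,T]×ℝ³×ℝ³ → ℝ satisfies 0 ≤ c̄(t,x,v) ≤ C₀⟨v⟩^γ. Then there exist constants C > 0, depending only on γ and C₀, and α > 0, depending only on γ, C₀, and ρ, such that for every K > 0 the function f̄(t,x,v) = K exp(αt − β(t)|v|^{2−γ}) with β(t) = ρ/(2ρCt + 1) satisfies ∂_t f̄ + v·∇_x f̄ − tr(ā(t,x,v) D²_v f̄) − c̄(t,x,v) f̄ ≥ 0 on [0,T]×ℝ³×ℝ³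 (i.e., f̄ is a supersolution of the linear Landau-type equation). -/
namespace Stmt18

noncomputable section
open MeasureTheory Real Filter ENNReal

/-- Partial derivative ∂_{v_i} for functions on ℝ³. -/
def pd3 (i : Fin 3) (h : E3 → ℝ) : E3 → ℝ :=
  fun v => fderiv ℝ h v (EuclideanSpace.single i 1)

/-- The barrier f̄(t,x,v) = K exp(αt − β(t)|v|^{2−γ}) with β(t) = ρ/(2ρCt + 1). -/
def supf (γ ρ K α C : ℝ) (t : ℝ) (v : E3) : ℝ :=
  K * Real.exp (α * t - ρ / (2 * ρ * C * t + 1) * ‖v‖ ^ (2 - γ))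

section RadialExp

open scoped RealInnerProductSpace Topology

def radialExp {E : Type*} [Norm E] (A b p : ℝ) (w : E) : ℝ := A * Real.exp (-(b * ‖w‖ ^ p))

lemma radialExp_nonneg {E : Type*} [Norm E] {A : ℝ} (hA : 0 ≤ A) (b p : ℝ) (w : E) :
    0 ≤ radialExp A b p w := by
  unfold radialExp; positivity

variable {E : Type*} [NormedAddCommGroup E] [InnerProductSpace ℝ E]

lemma hasFDerivAt_radialExp (A b : ℝ) {p : ℝ} (hp : 1 < p) (v : E) :
    HasFDerivAt (radialExp A b p)
      ((-(b * p * ‖v‖ ^ (p - 2)) * radialExp A b p v) • innerSL ℝ v) v := by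
  refine (((hasFDerivAt_norm_rpow v hp).const_mul b).neg.exp.const_mul A).congr_fderiv ?_
  ext w
  simp only [radialExp, smul_apply, neg_apply, Pi.neg_apply, smul_eq_mul]
  ring

lemma hasFDerivAt_norm_rpow_of_ne_zero {v : E} (hv : v ≠ 0) (q : ℝ) :
    HasFDerivAt (fun w : E => ‖w‖ ^ q) ((q * ‖v‖ ^ (q - 2)) • innerSL ℝ v) v := by
  convert ((hasStrictFDerivAt_norm_sq v).rpow_const (p := q / 2) (by simp [hv])).hasFDerivAt
    using 1
  · ext w
    rw [← Real.rpow_natCast_mul (norm_nonneg w)]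
    norm_num [mul_div_cancel₀]
  · simp_rw [← Real.rpow_natCast_mul (norm_nonneg _), ← Nat.cast_smul_eq_nsmul ℝ, smul_smul]
    ring_nf

lemma hasFDerivAt_norm_rpow_mul_inner {q : ℝ} (hq : 0 < q) (u v : E) :
    HasFDerivAt (fun w : E => ‖w‖ ^ q * ⟪w, u⟫)
      ((q * ‖v‖ ^ (q - 2) * ⟪v, u⟫) • innerSL ℝ v + ‖v‖ ^ q • innerSL ℝ u) v := by
  by_cases hv : v = 0
  · subst hv
    simp only [norm_zero, Real.zero_rpow hq.ne', inner_zero_left, mul_zero, map_zero, smul_zero,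
      zero_smul, add_zero]
    refine .of_isLittleO ?_
    have hsmall : (fun w : E => ‖w‖ ^ q) =o[𝓝 0] (fun _ => (1 : ℝ)) := by
      refine (Asymptotics.isLittleO_const_iff one_ne_zero).mpr ?_
      convert (continuous_norm.tendsto (0 : E)).rpow_const (p := q) (.inr hq.le)
      simp [Real.zero_rpow hq.ne']
    have hlin : (fun w : E => ⟪w, u⟫) =O[𝓝 0] (fun w => ‖w‖) :=
      Asymptotics.isBigO_of_le' (c := ‖u‖) _ fun w => by
        rw [Real.norm_eq_abs, norm_norm, mul_comm]; exact abs_real_inner_le_norm w u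
    have hprod := hsmall.mul_isBigO hlin
    simp only [one_mul] at hprod
    simpa [Real.zero_rpow hq.ne'] using hprod.trans_isBigO
      (Asymptotics.isBigO_norm_left.mpr (Asymptotics.isBigO_refl (fun w : E => w) _))
  · simp_rw [real_inner_comm u]
    refine ((hasFDerivAt_norm_rpow_of_ne_zero hv q).fun_mul
      (innerSL ℝ u).hasFDerivAt).congr_fderiv ?_
    ext w
    simp only [add_apply, smul_apply, innerSL_apply_apply, smul_eq_mul]
    ring

lemma fderiv_fderiv_radialExp_apply (A b : ℝ) {p : ℝ} (hp : 2 < p) (u u' v : E) :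
    fderiv ℝ (fun w => fderiv ℝ (radialExp A b p) w u) v u' =
      radialExp A b p v * (((b * p * ‖v‖ ^ (p - 2)) ^ 2 - b * p * (p - 2) * ‖v‖ ^ (p - 4)) *
        (⟪v, u⟫ * ⟪v, u'⟫) - b * p * ‖v‖ ^ (p - 2) * ⟪u, u'⟫) := by
  have hgrad : (fun w => fderiv ℝ (radialExp A b p) w u) =
      fun w => (-(b * p) * radialExp A b p w) * (‖w‖ ^ (p - 2) * ⟪w, u⟫) := by
    funext w
    rw [(hasFDerivAt_radialExp A b (by linarith) w).fderiv]
    simp only [smul_apply, innerSL_apply_apply, smul_eq_mul]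
    ring
  have hsecond := ((hasFDerivAt_radialExp A b (by linarith) v).const_mul (-(b * p))).fun_mul
    (hasFDerivAt_norm_rpow_mul_inner (by linarith : 0 < p - 2) u v)
  rw [hgrad, hsecond.fderiv]
  simp only [add_apply, smul_apply, innerSL_apply_apply, smul_eq_mul,
    show p - 2 - 2 = p - 4 by ring]
  ring

end RadialExp

theorem _root_.Matrix.PosSemidef.sum_sum_mul_mul_nonneg {ι : Type*} [Fintype ι]
    {a : Matrix ι ι ℝ} (ha : a.PosSemidef) (x : ι → ℝ) : 0 ≤ ∑ i, ∑ j, a i j * x i * x j := by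
  simpa [dotProduct, Matrix.mulVec, Finset.mul_sum, mul_comm, mul_left_comm] using
    ha.dotProduct_mulVec_nonneg x

lemma one_le_jap (v : E3) : 1 ≤ jap v :=
  Real.one_le_sqrt.mpr (by nlinarith [sq_nonneg ‖v‖])

lemma norm_le_jap (v : E3) : ‖v‖ ≤ jap v :=
  Real.le_sqrt_of_sq_le (by linarith)

lemma jap_rpow_le_one {γ : ℝ} (hγ : γ ≤ 0) (v : E3) : jap v ^ γ ≤ 1 :=
  Real.rpow_le_one_of_one_le_of_nonpos (one_le_jap v) hγ

lemma sq_norm_mul_jap_rpow_le {γ : ℝ} (hγ : γ ≤ 0) (v : E3) :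
    ‖v‖ ^ 2 * jap v ^ γ ≤ ‖v‖ ^ (2 + γ) := by
  rcases eq_or_ne v 0 with rfl | hv0
  · simpa using Real.rpow_nonneg (le_refl (0 : ℝ)) (2 + γ)
  · have hv : 0 < ‖v‖ := norm_pos_iff.mpr hv0
    calc ‖v‖ ^ 2 * jap v ^ γ ≤ ‖v‖ ^ 2 * ‖v‖ ^ γ :=
          mul_le_mul_of_nonneg_left (Real.rpow_le_rpow_of_nonpos hv (norm_le_jap v) hγ)
            (by positivity)
      _ = ‖v‖ ^ (2 + γ) := by rw [Real.rpow_add hv, Real.rpow_two]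

lemma rpow_neg_sq_mul_rpow_two_add {r γ : ℝ} (hr : 0 ≤ r) (hγ : γ < 0) :
    (r ^ (-γ)) ^ 2 * r ^ (2 + γ) = r ^ (2 - γ) := by
  rw [← Real.rpow_natCast, ← Real.rpow_mul hr, ← Real.rpow_add' hr (by norm_num; linarith)]
  ring_nf

lemma sum_mul_pd3_pd3_radialExp (a : Matrix (Fin 3) (Fin 3) ℝ) (A b : ℝ) {p : ℝ} (hp : 2 < p)
    (v : E3) :
    ∑ i, ∑ j, a i j * pd3 i (pd3 j (radialExp A b p)) v =
      radialExp A b p v * (((b * p * ‖v‖ ^ (p - 2)) ^ 2 - b * p * (p - 2) * ‖v‖ ^ (p - 4)) *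
        ∑ i, ∑ j, a i j * v i * v j - b * p * ‖v‖ ^ (p - 2) * a.trace) := by
  unfold pd3
  simp only [fderiv_fderiv_radialExp_apply A b hp, EuclideanSpace.inner_single_right,
    PiLp.single_apply, conj_trivial, one_mul, Fin.sum_univ_three, Matrix.trace, Matrix.diag_apply,
    Fin.isValue, Fin.reduceEq, ↓reduceIte]
  ring

lemma sum_mul_pd3_pd3_radialExp_le {a : Matrix (Fin 3) (Fin 3) ℝ} (ha : a.PosSemidef)
    {A b γ C₀ : ℝ} (hA : 0 ≤ A) (hb : 0 ≤ b) (hγ : γ < 0) (hC₀ : 0 ≤ C₀) {v : E3}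
    (hQ : ∑ i, ∑ j, a i j * v i * v j ≤ C₀ * ‖v‖ ^ 2 * jap v ^ γ) :
    ∑ i, ∑ j, a i j * pd3 i (pd3 j (radialExp A b (2 - γ))) v ≤
      radialExp A b (2 - γ) v * (((2 - γ) * b) ^ 2 * C₀ * ‖v‖ ^ (2 - γ)) := by
  rw [sum_mul_pd3_pd3_radialExp a A b (by linarith), show 2 - γ - 2 = -γ by ring]
  set Q := ∑ i, ∑ j, a i j * v i * v j
  have hQ0 : 0 ≤ Q := ha.sum_sum_mul_mul_nonneg fun i => v i
  have hweight : (‖v‖ ^ (-γ)) ^ 2 * Q ≤ C₀ * ‖v‖ ^ (2 - γ) :=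
    calc (‖v‖ ^ (-γ)) ^ 2 * Q ≤ (‖v‖ ^ (-γ)) ^ 2 * (C₀ * (‖v‖ ^ 2 * jap v ^ γ)) :=
          mul_le_mul_of_nonneg_left (hQ.trans_eq (mul_assoc _ _ _)) (by positivity)
      _ ≤ (‖v‖ ^ (-γ)) ^ 2 * (C₀ * ‖v‖ ^ (2 + γ)) := by
          gcongr; exact sq_norm_mul_jap_rpow_le hγ.le v
      _ = C₀ * ‖v‖ ^ (2 - γ) := by
          rw [mul_left_comm, rpow_neg_sq_mul_rpow_two_add (norm_nonneg v) hγ]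
  have hbp : 0 ≤ b * (2 - γ) := mul_nonneg hb (by linarith)
  have hcurv : 0 ≤ b * (2 - γ) * -γ * ‖v‖ ^ (2 - γ - 4) * Q :=
    mul_nonneg (mul_nonneg (mul_nonneg hbp (by linarith)) (by positivity)) hQ0
  have hdiag : 0 ≤ b * (2 - γ) * ‖v‖ ^ (-γ) * a.trace :=
    mul_nonneg (mul_nonneg hbp (by positivity)) ha.trace_nonneg
  refine mul_le_mul_of_nonneg_left ?_ (radialExp_nonneg hA b _ v)
  nlinarith [mul_le_mul_of_nonneg_left hweight (sq_nonneg (b * (2 - γ)))]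

lemma supf_eq_radialExp (γ ρ K α C t : ℝ) :
    supf γ ρ K α C t = radialExp (K * Real.exp (α * t)) (ρ / (2 * ρ * C * t + 1)) (2 - γ) := by
  funext v
  rw [supf, radialExp, sub_eq_add_neg, Real.exp_add]
  ring

lemma deriv_supf (γ ρ K α C : ℝ) (v : E3) {t : ℝ} (ht : 2 * ρ * C * t + 1 ≠ 0) :
    deriv (fun s => supf γ ρ K α C s v) t =
      supf γ ρ K α C t v * (α + 2 * C * (ρ / (2 * ρ * C * t + 1)) ^ 2 * ‖v‖ ^ (2 - γ)) := by
  have hβ : HasDerivAt (fun s => ρ / (2 * ρ * C * s + 1))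
      (-(2 * C) * (ρ / (2 * ρ * C * t + 1)) ^ 2) t := by
    refine ((hasDerivAt_const t ρ).div (((hasDerivAt_id' t).const_mul (2 * ρ * C)).add_const 1)
      ht).congr_deriv ?_
    field_simp
    ring
  have hexp :=
    (((hasDerivAt_id' t).const_mul α).fun_sub (hβ.mul_const (‖v‖ ^ (2 - γ)))).exp.const_mul K
  refine (hexp.congr_deriv ?_).deriv
  rw [supf]
  ring

theorem landau_supersolution_general
    (γ T ρ C₀ : ℝ)
    (hγ : γ ∈ Set.Ico (-3 : ℝ) 0)
    (hρ : 0 < ρ) (hC₀ : 0 < C₀)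
    (abar : ℝ → E3 → E3 → Matrix (Fin 3) (Fin 3) ℝ)
    (cbar : ℝ → E3 → E3 → ℝ)
    (habar_psd : ∀ t ∈ Set.Icc (0 : ℝ) T, ∀ x v : E3, (abar t x v).PosSemidef)
    (h_up_v : ∀ t ∈ Set.Icc (0 : ℝ) T, ∀ x v : E3,
      (∑ i, ∑ j, abar t x v i j * v i * v j) ≤ C₀ * ‖v‖ ^ 2 * jap v ^ γ)
    (hc_up : ∀ t ∈ Set.Icc (0 : ℝ) T, ∀ x v : E3, cbar t x v ≤ C₀ * jap v ^ γ) :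
    ∃ C : ℝ, 0 < C ∧ ∃ α : ℝ, 0 < α ∧
      ∀ K : ℝ, 0 < K →
        ∀ t ∈ Set.Icc (0 : ℝ) T, ∀ x v : E3,
          0 ≤ deriv (fun s => supf γ ρ K α C s v) t -
            (∑ i, ∑ j, abar t x v i j *
              pd3 i (pd3 j (fun u => supf γ ρ K α C t u)) v) -
            cbar t x v * supf γ ρ K α C t v := by
  obtain ⟨-, hγ0⟩ := hγ
  have hp : 0 < 2 - γ := by linarith
  refine ⟨(2 - γ) ^ 2 * C₀ / 2, by positivity, C₀, hC₀, fun K hK t ht x v => ?_⟩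
  have hden : 0 < 2 * ρ * ((2 - γ) ^ 2 * C₀ / 2) * t + 1 := by
    have ht0 : 0 ≤ t := ht.1
    positivity
  have hA : 0 ≤ K * Real.exp (C₀ * t) := by positivity
  have hdiff := sum_mul_pd3_pd3_radialExp_le (habar_psd t ht x v) hA (div_pos hρ hden).le hγ0
    hC₀.le (h_up_v t ht x v)
  have hc : cbar t x v ≤ C₀ :=
    (hc_up t ht x v).trans (mul_le_of_le_one_right hC₀.le (jap_rpow_le_one hγ0.le v))
  have hf := radialExp_nonneg hA (ρ / (2 * ρ * ((2 - γ) ^ 2 * C₀ / 2) * t + 1)) (2 - γ) v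
  rw [deriv_supf γ ρ K C₀ _ v hden.ne', supf_eq_radialExp]
  nlinarith [mul_le_mul_of_nonneg_left hc hf]

/-- **The super-solution construction in the proof of Proposition 4.5.** -/
theorem landau_supersolution
    (γ T ρ C₀ : ℝ)
    (hγ : γ ∈ Set.Ico (-3 : ℝ) 0)
    (hT : 0 < T) (hρ : 0 < ρ) (hC₀ : 0 < C₀)
    (abar : ℝ → E3 → E3 → Matrix (Fin 3) (Fin 3) ℝ)
    (cbar : ℝ → E3 → E3 → ℝ)
    (habar_psd : ∀ t ∈ Set.Icc (0 : ℝ) T, ∀ x v : E3, (abar t x v).PosSemidef)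
    (h_tr_up : ∀ t ∈ Set.Icc (0 : ℝ) T, ∀ x v : E3,
      Matrix.trace (abar t x v) ≤ C₀ * jap v ^ (γ + 2))
    (h_up_v : ∀ t ∈ Set.Icc (0 : ℝ) T, ∀ x v : E3,
      (∑ i, ∑ j, abar t x v i j * v i * v j) ≤ C₀ * ‖v‖ ^ 2 * jap v ^ γ)
    (hc_nonneg : ∀ t ∈ Set.Icc (0 : ℝ) T, ∀ x v : E3, 0 ≤ cbar t x v)
    (hc_up : ∀ t ∈ Set.Icc (0 : ℝ) T, ∀ x v : E3, cbar t x v ≤ C₀ * jap v ^ γ) :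
    ∃ C : ℝ, 0 < C ∧ ∃ α : ℝ, 0 < α ∧
      ∀ K : ℝ, 0 < K →
        ∀ t ∈ Set.Icc (0 : ℝ) T, ∀ x v : E3,
          0 ≤ deriv (fun s => supf γ ρ K α C s v) t -
            (∑ i, ∑ j, abar t x v i j *
              pd3 i (pd3 j (fun u => supf γ ρ K α C t u)) v) -
            cbar t x v * supf γ ρ K α C t v :=
  landau_supersolution_general γ T ρ C₀ hγ hρ hC₀ abar cbar habar_psd h_up_v hc_up

end
end Stmt18
end
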